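/- Let κ > 0 and let g: ℝ → ℝ be bounded and continuous. Then the convolution K₀ * g belongs to C²_b(ℝ) and satisfies (K₀ * g)''(ξ) - κ² (K₀ * g)(ξ) + g(ξ) = 0 for all ξ ∈ ℝ. -/

import Mathlib

/-!
Splitting the integral at `ξ` gives `K₀ * g = (P + Q) / (2κ)`, where
`P ξ = ∫_{y ≤ ξ} e^{-κ(ξ-y)} g y` and `Q ξ = ∫_{y ≥ ξ} e^{-κ(y-ξ)} g y` (the same one-sided
convolution applied to `g ∘ neg`, read at `-ξ`). They solve `P' = g - κ P` and `Q' = κ Q - g`,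
the two first-order factors of `κ² - d²/dξ² = (κ - d/dξ)(κ + d/dξ)`, so
`(K₀ * g)' = (Q - P) / 2` and `(K₀ * g)'' = κ² (K₀ * g) - g`. The bounds `|P|, |Q| ≤ sup |g| / κ`
give the `C²_b` bounds.
-/

open Real MeasureTheory Filter Topology
open Set

/-- The kernel K₀(ξ) = e^{-κ|ξ|}/(2κ). -/
noncomputable def K0 (κ ξ : ℝ) : ℝ := Real.exp (-κ * |ξ|) / (2 * κ)

/-- Convolution (K * g)(ξ) = ∫ K(ξ-y) g(y) dy. -/
noncomputable def conv (K g : ℝ → ℝ) (ξ : ℝ) : ℝ := ∫ y, K (ξ - y) * g y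

/-- ψ ∈ C²_b(ℝ): twice continuously differentiable with bounded derivatives up to order 2. -/
def C2b (ψ : ℝ → ℝ) : Prop :=
  ContDiff ℝ 2 ψ ∧ (∃ C, ∀ x, |ψ x| ≤ C) ∧ (∃ C, ∀ x, |deriv ψ x| ≤ C) ∧
    ∃ C, ∀ x, |deriv (deriv ψ) x| ≤ C

theorem hasDerivAt_integral_Iic {E : Type*} [NormedAddCommGroup E] [NormedSpace ℝ E]
    [CompleteSpace E] {f : ℝ → E} (hf : Continuous f) (hint : ∀ c, IntegrableOn f (Iic c)) (t : ℝ) :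
    HasDerivAt (fun u => ∫ y in Iic u, f y) (f t) t := by
  have hsplit :
      (fun u => ∫ y in Iic u, f y) = fun u => (∫ y in Iic 0, f y) + ∫ y in 0..u, f y := by
    funext u
    rw [← intervalIntegral.integral_Iic_sub_Iic (hint 0) (hint u), add_sub_cancel]
  rw [hsplit]
  exact (intervalIntegral.integral_hasDerivAt_right (hf.intervalIntegrable _ _)
    (hf.stronglyMeasurableAtFilter _ _) hf.continuousAt).const_add _

theorem integrable_exp_neg_mul_abs {κ : ℝ} (hκ : 0 < κ) :
    Integrable fun x : ℝ => exp (-κ * |x|) := by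
  rw [← integrableOn_univ, ← Iic_union_Ioi (a := 0), integrableOn_union]
  constructor
  · refine (integrableOn_exp_mul_Iic hκ 0).congr_fun (fun x hx => ?_) measurableSet_Iic
    simp [abs_of_nonpos (mem_Iic.mp hx)]
  · refine (integrableOn_exp_mul_Ioi (neg_lt_zero.mpr hκ) 0).congr_fun (fun x hx => ?_)
      measurableSet_Ioi
    simp [abs_of_pos (mem_Ioi.mp hx)]

/-- The bounded solution of `P' + κ P = h`. -/
noncomputable def causalExpConv (κ : ℝ) (h : ℝ → ℝ) (ξ : ℝ) : ℝ :=
  ∫ y in Iic ξ, exp (-κ * (ξ - y)) * h y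

theorem causalExpConv_eq_exp_mul (κ : ℝ) (h : ℝ → ℝ) (ξ : ℝ) :
    causalExpConv κ h ξ = exp (-κ * ξ) * ∫ y in Iic ξ, exp (κ * y) * h y := by
  rw [causalExpConv, ← integral_const_mul]
  congr 1 with y
  rw [← mul_assoc, ← exp_add]
  ring_nf

section causalExpConv

variable {κ C : ℝ} {h : ℝ → ℝ}

theorem integrableOn_exp_mul_mul_Iic (hκ : 0 < κ) (hh : Continuous h) (hC : ∀ x, |h x| ≤ C)
    (c : ℝ) : IntegrableOn (fun y => exp (κ * y) * h y) (Iic c) :=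
  (integrableOn_exp_mul_Iic hκ c).mul_bdd hh.aestronglyMeasurable (ae_of_all _ hC)

theorem abs_causalExpConv_le (hκ : 0 < κ) (hC : ∀ x, |h x| ≤ C) (ξ : ℝ) :
    |causalExpConv κ h ξ| ≤ C / κ := by
  have hI : |∫ y in Iic ξ, exp (κ * y) * h y| ≤ C * (exp (κ * ξ) / κ) :=
    calc |∫ y in Iic ξ, exp (κ * y) * h y| ≤ ∫ y in Iic ξ, C * exp (κ * y) := by
          rw [← Real.norm_eq_abs]
          refine norm_integral_le_of_norm_le ((integrableOn_exp_mul_Iic hκ ξ).const_mul C)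
            (ae_of_all _ fun y => ?_)
          rw [norm_mul, Real.norm_of_nonneg (exp_pos _).le, mul_comm]
          exact mul_le_mul_of_nonneg_right (hC y) (exp_pos _).le
      _ = C * (exp (κ * ξ) / κ) := by rw [integral_const_mul, integral_exp_mul_Iic hκ]
  rw [causalExpConv_eq_exp_mul, abs_mul, abs_of_pos (exp_pos _)]
  calc exp (-κ * ξ) * |∫ y in Iic ξ, exp (κ * y) * h y|
      ≤ exp (-κ * ξ) * (C * (exp (κ * ξ) / κ)) := mul_le_mul_of_nonneg_left hI (exp_pos _).le
    _ = C / κ := by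
      rw [neg_mul, exp_neg]
      field_simp

theorem hasDerivAt_causalExpConv (hκ : 0 < κ) (hh : Continuous h) (hC : ∀ x, |h x| ≤ C)
    (ξ : ℝ) : HasDerivAt (causalExpConv κ h) (h ξ - κ * causalExpConv κ h ξ) ξ := by
  have hexp : HasDerivAt (fun x => exp (-κ * x)) (-κ * exp (-κ * ξ)) ξ := by
    simpa [mul_comm] using ((hasDerivAt_id ξ).const_mul (-κ)).exp
  have hint := hasDerivAt_integral_Iic (by fun_prop : Continuous fun y => exp (κ * y) * h y)
    (integrableOn_exp_mul_mul_Iic hκ hh hC) ξ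
  rw [funext (causalExpConv_eq_exp_mul κ h)]
  refine (hexp.mul hint).congr_deriv ?_
  beta_reduce
  rw [← mul_assoc, ← exp_add]
  simp only [neg_mul, neg_add_cancel, exp_zero]
  ring

theorem hasDerivAt_causalExpConv_comp_neg (hκ : 0 < κ) (hh : Continuous h)
    (hC : ∀ x, |h x| ≤ C) (ξ : ℝ) :
    HasDerivAt (fun x => causalExpConv κ (fun y => h (-y)) (-x))
      (κ * causalExpConv κ (fun y => h (-y)) (-ξ) - h ξ) ξ := by
  have := (hasDerivAt_causalExpConv hκ (by fun_prop : Continuous fun y => h (-y))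
    (fun y => hC (-y)) (-ξ)).scomp ξ (hasDerivAt_neg ξ)
  refine this.congr_deriv ?_
  simp only [neg_neg, smul_eq_mul]
  ring

end causalExpConv

theorem conv_K0_eq {κ C : ℝ} {g : ℝ → ℝ} (hκ : 0 < κ) (hg : Continuous g)
    (hC : ∀ x, |g x| ≤ C) (ξ : ℝ) :
    conv (K0 κ) g ξ =
      (causalExpConv κ g ξ + causalExpConv κ (fun y => g (-y)) (-ξ)) / (2 * κ) := by
  have hint : Integrable fun y => exp (-κ * |ξ - y|) * g y :=
    ((integrable_exp_neg_mul_abs hκ).comp_sub_left ξ).mul_bdd hg.aestronglyMeasurable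
      (ae_of_all _ hC)
  have hleft : ∫ y in Iic ξ, exp (-κ * |ξ - y|) * g y = causalExpConv κ g ξ :=
    setIntegral_congr_fun measurableSet_Iic fun y hy => by
      rw [abs_of_nonneg (sub_nonneg.mpr hy)]
  have hright : ∫ y in Ioi ξ, exp (-κ * |ξ - y|) * g y =
      causalExpConv κ (fun y => g (-y)) (-ξ) := by
    rw [causalExpConv, ← neg_neg ξ, ← integral_comp_neg_Iic, neg_neg]
    refine setIntegral_congr_fun measurableSet_Iic fun y hy => ?_
    rw [sub_neg_eq_add, abs_of_nonpos (by linarith [mem_Iic.mp hy])]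
    ring_nf
  simp only [conv, K0, div_mul_eq_mul_div, integral_div]
  rw [← intervalIntegral.integral_Iic_add_Ioi hint.integrableOn hint.integrableOn, hleft, hright]

theorem C2b_of_hasDerivAt {u v w : ℝ → ℝ} (hu : ∀ x, HasDerivAt u (v x) x)
    (hv : ∀ x, HasDerivAt v (w x) x) (hw : Continuous w) (hub : ∃ C, ∀ x, |u x| ≤ C)
    (hvb : ∃ C, ∀ x, |v x| ≤ C) (hwb : ∃ C, ∀ x, |w x| ≤ C) : C2b u := by
  have hu' : deriv u = v := funext fun x => (hu x).deriv
  have hv' : deriv v = w := funext fun x => (hv x).deriv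
  refine ⟨?_, hub, hu' ▸ hvb, hu' ▸ hv' ▸ hwb⟩
  rw [show (2 : WithTop ℕ∞) = 1 + 1 by norm_num, contDiff_succ_iff_deriv, hu',
    contDiff_one_iff_deriv, hv']
  exact ⟨fun x => (hu x).differentiableAt, by simp, fun x => (hv x).differentiableAt, hw⟩

section FirstOrderFactors

variable {κ C : ℝ} {g P Q : ℝ → ℝ}

theorem hasDerivAt_add_div_of_factors (hκ : κ ≠ 0) {ξ : ℝ}
    (hP : HasDerivAt P (g ξ - κ * P ξ) ξ) (hQ : HasDerivAt Q (κ * Q ξ - g ξ) ξ) :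
    HasDerivAt (fun x => (P x + Q x) / (2 * κ)) ((Q ξ - P ξ) / 2) ξ := by
  refine (hP.add hQ).div_const (2 * κ) |>.congr_deriv ?_
  field_simp
  ring

theorem hasDerivAt_sub_div_of_factors {ξ : ℝ}
    (hP : HasDerivAt P (g ξ - κ * P ξ) ξ) (hQ : HasDerivAt Q (κ * Q ξ - g ξ) ξ) :
    HasDerivAt (fun x => (Q x - P x) / 2) (κ ^ 2 * ((P ξ + Q ξ) / (2 * κ)) - g ξ) ξ := by
  refine (hQ.sub hP).div_const 2 |>.congr_deriv ?_
  field_simp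
  ring

theorem deriv_deriv_add_div_of_factors (hκ : κ ≠ 0)
    (hP : ∀ ξ, HasDerivAt P (g ξ - κ * P ξ) ξ) (hQ : ∀ ξ, HasDerivAt Q (κ * Q ξ - g ξ) ξ)
    (ξ : ℝ) :
    deriv (deriv fun x => (P x + Q x) / (2 * κ)) ξ =
      κ ^ 2 * ((P ξ + Q ξ) / (2 * κ)) - g ξ := by
  rw [funext fun x => (hasDerivAt_add_div_of_factors hκ (hP x) (hQ x)).deriv]
  exact (hasDerivAt_sub_div_of_factors (hP ξ) (hQ ξ)).deriv

theorem C2b_add_div_of_factors (hκ : 0 < κ) (hg : Continuous g) (hC : ∀ x, |g x| ≤ C)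
    (hP : ∀ ξ, HasDerivAt P (g ξ - κ * P ξ) ξ) (hQ : ∀ ξ, HasDerivAt Q (κ * Q ξ - g ξ) ξ)
    (hPb : ∀ ξ, |P ξ| ≤ C / κ) (hQb : ∀ ξ, |Q ξ| ≤ C / κ) :
    C2b fun x => (P x + Q x) / (2 * κ) := by
  have hu := fun ξ => hasDerivAt_add_div_of_factors hκ.ne' (hP ξ) (hQ ξ)
  have hub : ∀ ξ, |(P ξ + Q ξ) / (2 * κ)| ≤ C / κ ^ 2 := fun ξ =>
    calc |(P ξ + Q ξ) / (2 * κ)| = |P ξ + Q ξ| / (2 * κ) := by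
          rw [abs_div, abs_of_pos (by positivity : (0 : ℝ) < 2 * κ)]
      _ ≤ (C / κ + C / κ) / (2 * κ) := by
        gcongr
        exact (abs_add_le _ _).trans (add_le_add (hPb ξ) (hQb ξ))
      _ = C / κ ^ 2 := by field_simp; ring
  refine C2b_of_hasDerivAt hu (fun ξ => hasDerivAt_sub_div_of_factors (hP ξ) (hQ ξ))
    ((continuous_const.mul (continuous_iff_continuousAt.mpr fun ξ => (hu ξ).continuousAt)).sub hg)
    ⟨C / κ ^ 2, hub⟩ ⟨C / κ, fun ξ => ?_⟩ ⟨2 * C, fun ξ => ?_⟩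
  · calc |(Q ξ - P ξ) / 2| = |Q ξ - P ξ| / 2 := by rw [abs_div, abs_two]
      _ ≤ (C / κ + C / κ) / 2 := by
        gcongr
        exact (abs_sub _ _).trans (add_le_add (hQb ξ) (hPb ξ))
      _ = C / κ := by ring
  · calc |κ ^ 2 * ((P ξ + Q ξ) / (2 * κ)) - g ξ|
        ≤ κ ^ 2 * |(P ξ + Q ξ) / (2 * κ)| + |g ξ| :=
          (abs_sub _ _).trans_eq (by rw [abs_mul, abs_of_pos (pow_pos hκ 2)])
      _ ≤ κ ^ 2 * (C / κ ^ 2) + C := by gcongr; exacts [hub ξ, hC ξ]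
      _ = 2 * C := by field_simp; ring

end FirstOrderFactors

/-- `K₀` is the Green's function of `κ² - d²/dξ²`: for bounded continuous `g`,
`K₀ * g ∈ C²_b(ℝ)` and `(K₀*g)'' - κ²(K₀*g) + g = 0`. -/
theorem K0_green_function (κ : ℝ) (hκ : 0 < κ)
    (g : ℝ → ℝ) (hg : Continuous g) (hgb : ∃ C, ∀ x, |g x| ≤ C) :
    C2b (conv (K0 κ) g) ∧
    ∀ ξ, deriv (deriv (conv (K0 κ) g)) ξ - κ ^ 2 * conv (K0 κ) g ξ + g ξ = 0 := by
  obtain ⟨C, hC⟩ := hgb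
  have hP := hasDerivAt_causalExpConv hκ hg hC
  have hQ := hasDerivAt_causalExpConv_comp_neg hκ hg hC
  rw [funext (conv_K0_eq hκ hg hC)]
  refine ⟨C2b_add_div_of_factors hκ hg hC hP hQ (abs_causalExpConv_le hκ hC)
    (fun ξ => abs_causalExpConv_le hκ (fun y => hC (-y)) (-ξ)), fun ξ => ?_⟩
  rw [deriv_deriv_add_div_of_factors hκ.ne' hP hQ]
  ring
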